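/- arXiv:1804.03049 — 9 statements merged into one kernel-verified Lean document; each statement's English description precedes it below -/
import Mathlib

section
/- Let G be a group, H a subgroup of G, and A a nonempty finite subset of G. Then |A·A⁻¹ ∩ H| ≥ |A| / |π_{G/H}(A)|, where π_{G/H}(A) is the set of right cosets Hg meeting A. In particular |A·A⁻¹ ∩ H| ≥ |A| / [G : H] when the index is finite. -/
/-!
If `b, a ∈ A` lie in the same right coset `Ha`, then `b a⁻¹ ∈ A A⁻¹ ∩ H`, and `b ↦ b a⁻¹` is
injective. So every fibre of `A → H \ G` has at most `|A A⁻¹ ∩ H|` elements, and summing over the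
`|π_{G/H}(A)|` fibres gives `|A| ≤ |π_{G/H}(A)| · |A A⁻¹ ∩ H|`; finally `|π_{G/H}(A)| ≤ [G : H]`.
-/

open Pointwise QuotientGroup

namespace Finset

variable {G : Type*} [Group G] [DecidableEq G] (H : Subgroup G) [DecidablePred (· ∈ H)]
  [DecidableEq (Quotient (rightRel H))]

theorem card_filter_mk_rightRel_le {A : Finset G} {a : G} (ha : a ∈ A) :
    #{b ∈ A | Quotient.mk (rightRel H) b = Quotient.mk (rightRel H) a}
      ≤ #{x ∈ A * A⁻¹ | x ∈ H} := by
  refine card_le_card_of_injOn (· * a⁻¹) (fun b hb => ?_) fun _ _ _ _ => mul_right_cancel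
  obtain ⟨hbA, hba⟩ := mem_filter.mp hb
  have hab : a * b⁻¹ ∈ H := rightRel_apply.mp (Quotient.exact hba)
  exact mem_filter.mpr ⟨mul_mem_mul hbA (inv_mem_inv ha), by simpa using H.inv_mem hab⟩

theorem card_le_card_image_mk_rightRel_mul (A : Finset G) :
    #A ≤ #{x ∈ A * A⁻¹ | x ∈ H} * #(A.image (Quotient.mk (rightRel H))) :=
  card_le_mul_card_image A _ fun q hq => by
    obtain ⟨a, ha, rfl⟩ := mem_image.mp hq
    exact card_filter_mk_rightRel_le H ha

end Finset

theorem Subgroup.card_finset_quotient_rightRel_le_index {G : Type*} [Group G] {H : Subgroup G}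
    (hH : H.index ≠ 0) (s : Finset (Quotient (rightRel H))) : s.card ≤ H.index := by
  have hcard : Nat.card (Quotient (rightRel H)) = H.index :=
    Nat.card_congr (quotientRightRelEquivQuotientLeftRel H)
  have : Finite (Quotient (rightRel H)) := Nat.finite_of_card_ne_zero (hcard ▸ hH)
  have := Fintype.ofFinite (Quotient (rightRel H))
  calc s.card ≤ Fintype.card (Quotient (rightRel H)) := s.card_le_univ
    _ = H.index := Nat.card_eq_fintype_card.symm.trans hcard

theorem stmt_4_general {G : Type*} [Group G] [DecidableEq G] (H : Subgroup G)
    [DecidablePred (· ∈ H)] [DecidableEq (Quotient (QuotientGroup.rightRel H))]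
    (A : Finset G) :
    (A.card : ℝ) / ((A.image fun a => Quotient.mk (QuotientGroup.rightRel H) a).card : ℝ)
        ≤ (((A * A⁻¹).filter (· ∈ H)).card : ℝ)
      ∧ (H.index ≠ 0 →
        (A.card : ℝ) / (H.index : ℝ) ≤ (((A * A⁻¹).filter (· ∈ H)).card : ℝ)) := by
  have key := A.card_le_card_image_mk_rightRel_mul H
  refine ⟨div_le_of_le_mul₀ (by positivity) (by positivity) (by exact_mod_cast key),
    fun hH => div_le_of_le_mul₀ (by positivity) (by positivity) ?_⟩
  have hQ := Subgroup.card_finset_quotient_rightRel_le_index hH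
    (A.image (Quotient.mk (rightRel H)))
  exact_mod_cast key.trans (Nat.mul_le_mul_left _ hQ)

theorem stmt_4 {G : Type*} [Group G] [DecidableEq G] (H : Subgroup G)
    [DecidablePred (· ∈ H)] [DecidableEq (Quotient (QuotientGroup.rightRel H))]
    (A : Finset G) (hA : A.Nonempty) :
    (A.card : ℝ) / ((A.image fun a => Quotient.mk (QuotientGroup.rightRel H) a).card : ℝ)
        ≤ (((A * A⁻¹).filter (· ∈ H)).card : ℝ)
      ∧ (H.index ≠ 0 →
        (A.card : ℝ) / (H.index : ℝ) ≤ (((A * A⁻¹).filter (· ∈ H)).card : ℝ)) :=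
  stmt_4_general H A
end

section
/- Let G be a group, H a subgroup of G, and A a nonempty finite subset of G. Then for any k ≥ 1, |A^{k+1}| ≥ (|A^k ∩ H| / |A·A⁻¹ ∩ H|) · |A|. -/
/-! Count the pairs `(b, a)` with `b ∈ A^k ∩ H` and `a ∈ A` through their products `b * a ∈ A^{k+1}`.
Two pairs with the same product satisfy `b₀⁻¹ * b = a₀ * a⁻¹`, an element of `A * A⁻¹ ∩ H`
which determines the pair, so each product is hit at most `|A * A⁻¹ ∩ H|` times. -/

open Pointwise

namespace Finset

variable {G : Type*} [Group G] [DecidableEq G]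

theorem card_filter_mul_eq_le (B A : Finset G) (x : G) :
    #{p ∈ B ×ˢ A | p.1 * p.2 = x} ≤ #((B⁻¹ * B) ∩ (A * A⁻¹)) := by
  obtain h | ⟨⟨b₀, a₀⟩, h₀⟩ := {p ∈ B ×ˢ A | p.1 * p.2 = x}.eq_empty_or_nonempty
  · simp [h]
  simp only [mem_filter, mem_product] at h₀
  obtain ⟨⟨hb₀, ha₀⟩, rfl⟩ := h₀
  refine card_le_card_of_injOn (fun p => b₀⁻¹ * p.1) ?_ ?_
  · rintro ⟨b, a⟩ hba
    simp only [mem_coe, mem_filter, mem_product] at hba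
    obtain ⟨⟨hb, ha⟩, hprod⟩ := hba
    have hquot : b₀⁻¹ * b = a₀ * a⁻¹ := by
      rw [inv_mul_eq_iff_eq_mul, ← mul_assoc, eq_mul_inv_iff_mul_eq, hprod]
    refine mem_inter.2 ⟨mul_mem_mul (inv_mem_inv hb₀) hb, ?_⟩
    show b₀⁻¹ * b ∈ A * A⁻¹
    exact hquot ▸ mul_mem_mul ha₀ (inv_mem_inv ha)
  · rintro ⟨b, a⟩ hba ⟨b', a'⟩ hba' hbb'
    simp only [mem_coe, mem_filter, mem_product] at hba hba'
    obtain rfl : b = b' := mul_left_cancel hbb'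
    obtain rfl : a = a' := mul_left_cancel (hba.2.trans hba'.2.symm)
    rfl

theorem card_mul_card_le_card_inter_mul_card_mul (B A : Finset G) :
    #B * #A ≤ #((B⁻¹ * B) ∩ (A * A⁻¹)) * #(B * A) := by
  rw [← card_product, ← image_mul_product]
  exact card_le_mul_card_image _ _ fun x _ => card_filter_mul_eq_le B A x

theorem card_mul_card_le_card_filter_mul_card_mul (H : Subgroup G) [DecidablePred (· ∈ H)]
    (B A : Finset G) (hB : ∀ b ∈ B, b ∈ H) :
    #B * #A ≤ #{x ∈ A * A⁻¹ | x ∈ H} * #(B * A) := by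
  have hsub : (B⁻¹ * B) ∩ (A * A⁻¹) ⊆ {x ∈ A * A⁻¹ | x ∈ H} := by
    intro x hx
    obtain ⟨hxB, hxA⟩ := mem_inter.1 hx
    obtain ⟨c, hc, b, hb, rfl⟩ := mem_mul.1 hxB
    refine mem_filter.2 ⟨hxA, H.mul_mem ?_ (hB b hb)⟩
    simpa using H.inv_mem (hB c⁻¹ (mem_inv'.1 hc))
  exact (card_mul_card_le_card_inter_mul_card_mul B A).trans
    (Nat.mul_le_mul_right _ (card_le_card hsub))

end Finset

open Finset in
theorem stmt_5_general {G : Type*} [Group G] [DecidableEq G] (H : Subgroup G)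
    [DecidablePred (· ∈ H)] (A : Finset G) (k : ℕ) :
    (((A ^ k).filter (· ∈ H)).card : ℝ) / ((((A * A⁻¹).filter (· ∈ H)).card : ℝ)) * (A.card : ℝ)
      ≤ ((A ^ (k + 1)).card : ℝ) := by
  have hmul : (A ^ k).filter (· ∈ H) * A ⊆ A ^ (k + 1) := by
    rw [pow_succ]
    exact mul_subset_mul_right (filter_subset _ _)
  have hcount := (card_mul_card_le_card_filter_mul_card_mul H ((A ^ k).filter (· ∈ H)) A
    fun b hb => (mem_filter.1 hb).2).trans (Nat.mul_le_mul_left _ (card_le_card hmul))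
  rw [div_mul_eq_mul_div]
  exact div_le_of_le_mul₀ (by positivity) (by positivity) (by rw [mul_comm (#(A ^ (k + 1)) : ℝ)]; exact_mod_cast hcount)

theorem stmt_5 {G : Type*} [Group G] [DecidableEq G] (H : Subgroup G)
    [DecidablePred (· ∈ H)] (A : Finset G) (hA : A.Nonempty) (k : ℕ) (hk : 1 ≤ k) :
    (((A ^ k).filter (· ∈ H)).card : ℝ) / ((((A * A⁻¹).filter (· ∈ H)).card : ℝ)) * (A.card : ℝ)
      ≤ ((A ^ (k + 1)).card : ℝ) :=
  stmt_5_general H A k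
end

section
/- Let G be a group, H ≤ K ≤ G subgroups, and A a nonempty finite subset of G. Then the number of right cosets of H inside K meeting A·A⁻¹ ∩ K is at least |π_{G/H}(A)| / |π_{G/K}(A)|, where π_{G/H}(A) denotes the set of right cosets of H in G meeting A. -/
/-!
Sending each right coset `H x` to `K x` maps the `H`-cosets meeting `A` onto the `K`-cosets meeting
`A`. If `y ∈ A`, right multiplication by `y⁻¹` injects the fibre over `K y` into the `H`-cosets
inside `K` meeting `A * A⁻¹`: a coset `H x` with `x ∈ A` and `K x = K y` goes to `H (x y⁻¹)`,
and `x y⁻¹ ∈ K`. So every fibre is no larger than the right-hand side, and the number of fibres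
is the number of `K`-cosets meeting `A`.
-/

open Pointwise

namespace QuotientGroup

open scoped Finset

variable {G : Type*} [Group G]

def rightCosetMapOfLE {H K : Subgroup G} (hHK : H ≤ K) :
    Quotient (rightRel H) → Quotient (rightRel K) :=
  Quotient.map' id fun _ _ h => rightRel_apply.mpr (hHK (rightRel_apply.mp h))

def rightCosetMul (H : Subgroup G) (g : G) : Quotient (rightRel H) → Quotient (rightRel H) :=
  Quotient.map' (· * g) fun _ _ h => rightRel_apply.mpr <| by
    simpa [mul_assoc] using rightRel_apply.mp h

theorem rightCosetMul_injective (H : Subgroup G) (g : G) :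
    Function.Injective (rightCosetMul H g) := by
  rintro ⟨x⟩ ⟨y⟩ hxy
  have hmem : y * g * (x * g)⁻¹ ∈ H := rightRel_apply.mp (Quotient.exact hxy)
  exact Quotient.sound (rightRel_apply.mpr (by simpa [mul_assoc] using hmem))

variable [DecidableEq G] {H K : Subgroup G} [DecidablePred (· ∈ K)]
  [DecidableEq (Quotient (rightRel H))] [DecidableEq (Quotient (rightRel K))]

theorem card_fiber_rightCosetMapOfLE_le (hHK : H ≤ K) (A : Finset G) {y : G} (hy : y ∈ A) :
    #{q ∈ A.image (Quotient.mk (rightRel H)) |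
        rightCosetMapOfLE hHK q = Quotient.mk (rightRel K) y} ≤
      #(((A * A⁻¹).filter (· ∈ K)).image (Quotient.mk (rightRel H))) := by
  refine Finset.card_le_card_of_injOn (rightCosetMul H y⁻¹) ?_
    (rightCosetMul_injective H y⁻¹).injOn
  intro q hq
  obtain ⟨hqA, hqK⟩ := Finset.mem_filter.mp hq
  obtain ⟨x, hx, rfl⟩ := Finset.mem_image.mp hqA
  have hxy : x * y⁻¹ ∈ K := by
    simpa using K.inv_mem (rightRel_apply.mp (Quotient.exact hqK))
  exact Finset.mem_image_of_mem _
    (Finset.mem_filter.mpr ⟨Finset.mul_mem_mul hx (Finset.inv_mem_inv hy), hxy⟩)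

theorem card_image_mk_rightRel_le_mul (hHK : H ≤ K) (A : Finset G) :
    #(A.image (Quotient.mk (rightRel H))) ≤
      #(((A * A⁻¹).filter (· ∈ K)).image (Quotient.mk (rightRel H))) *
        #(A.image (Quotient.mk (rightRel K))) := by
  refine Finset.card_le_mul_card_image_of_maps_to (f := rightCosetMapOfLE hHK) ?_ _ ?_
  · intro q hq
    obtain ⟨x, hx, rfl⟩ := Finset.mem_image.mp hq
    exact Finset.mem_image_of_mem _ hx
  · intro b hb
    obtain ⟨y, hy, rfl⟩ := Finset.mem_image.mp hb
    exact card_fiber_rightCosetMapOfLE_le hHK A hy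

end QuotientGroup

theorem stmt_6_general {G : Type*} [Group G] [DecidableEq G] (H K : Subgroup G) (hHK : H ≤ K)
    [DecidablePred (· ∈ K)]
    [DecidableEq (Quotient (QuotientGroup.rightRel H))]
    [DecidableEq (Quotient (QuotientGroup.rightRel K))]
    (A : Finset G) :
    ((A.image fun a => Quotient.mk (QuotientGroup.rightRel H) a).card : ℝ)
        / ((A.image fun a => Quotient.mk (QuotientGroup.rightRel K) a).card : ℝ)
      ≤ (((((A * A⁻¹).filter (· ∈ K))).image
          fun a => Quotient.mk (QuotientGroup.rightRel H) a).card : ℝ) :=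
  div_le_of_le_mul₀ (Nat.cast_nonneg _) (Nat.cast_nonneg _) <| by
    exact_mod_cast QuotientGroup.card_image_mk_rightRel_le_mul hHK A

theorem stmt_6 {G : Type*} [Group G] [DecidableEq G] (H K : Subgroup G) (hHK : H ≤ K)
    [DecidablePred (· ∈ K)]
    [DecidableEq (Quotient (QuotientGroup.rightRel H))]
    [DecidableEq (Quotient (QuotientGroup.rightRel K))]
    (A : Finset G) (hA : A.Nonempty) :
    ((A.image fun a => Quotient.mk (QuotientGroup.rightRel H) a).card : ℝ)
        / ((A.image fun a => Quotient.mk (QuotientGroup.rightRel K) a).card : ℝ)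
      ≤ (((((A * A⁻¹).filter (· ∈ K))).image
          fun a => Quotient.mk (QuotientGroup.rightRel H) a).card : ℝ) :=
  stmt_6_general H K hHK A
end

section
/- Let G be a group, H₁ ◁ H₂ ≤ G with H₂/H₁ simple, and let N_i = ⋂_{g ∈ G} g H_i g⁻¹ be the normal cores (i = 1, 2). Then N₂/N₁ is isomorphic to a (possibly empty) direct product of copies of H₂/H₁. -/
/-!
Each `g : G` gives a homomorphism `N₂ →* H₂ ⧸ H₁`, `x ↦ g x g⁻¹`. Its image is the image of the
normal subgroup `N₂` of `H₂`, so by simplicity of `H₂ ⧸ H₁` it is trivial or everything, and the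
intersection of the kernels is `N₁`. Hence `N₂ ⧸ N₁` is cut out by finitely many normal subgroups
`K` with `N₂ ⧸ K` trivial or isomorphic to `S = H₂ ⧸ H₁`. Adding one such `A` to an intersection
`L` with `N ⧸ L ≅ Sʳ` either changes nothing (`L ≤ A`), or, `A` being maximal normal, gives
`A ⊔ L = ⊤`, and then the Chinese remainder theorem `N ⧸ (A ⊓ L) ≅ N ⧸ A × N ⧸ L` yields `Sʳ⁺¹`.
-/

open Subgroup QuotientGroup

namespace Subgroup

variable {N : Type*} [Group N]

instance normal_iInf {ι : Sort*} (K : ι → Subgroup N) [∀ i, (K i).Normal] : (iInf K).Normal :=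
  normal_iInf_normal inferInstance

theorem sup_eq_top_of_not_le {A L : Subgroup N} [A.Normal] [L.Normal] [IsSimpleGroup (N ⧸ A)]
    (h : ¬L ≤ A) : A ⊔ L = ⊤ := by
  rcases (‹L.Normal›.map _ (mk'_surjective A)).eq_bot_or_eq_top with hbot | htop
  · rw [map_eq_bot_iff, ker_mk'] at hbot
    exact absurd hbot h
  · simpa [comap_map_eq, sup_comm] using congrArg (comap (mk' A)) htop

end Subgroup

namespace QuotientGroup

variable {N : Type*} [Group N]

noncomputable def quotientInfEquivProdOfSupEqTop (A B : Subgroup N) [A.Normal] [B.Normal]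
    (h : A ⊔ B = ⊤) : N ⧸ (A ⊓ B) ≃* (N ⧸ A) × (N ⧸ B) :=
  (quotientMulEquivOfEq (by rw [MonoidHom.ker_prod, ker_mk', ker_mk'])).trans
    (quotientKerEquivOfSurjective ((mk' A).prod (mk' B)) <| by
      rintro ⟨⟨x⟩, ⟨y⟩⟩
      obtain ⟨a, ha, b, hb, hab⟩ := mem_sup_of_normal_left.mp (h ▸ mem_top (x⁻¹ * y))
      refine ⟨x * a, Prod.ext (QuotientGroup.eq.mpr ?_) (QuotientGroup.eq.mpr ?_)⟩
      · simpa using A.inv_mem ha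
      · rwa [mul_inv_rev, mul_assoc, ← hab, inv_mul_cancel_left])

end QuotientGroup

def MulEquiv.finCons (n : ℕ) (M : Type*) [Mul M] : M × (Fin n → M) ≃* (Fin (n + 1) → M) where
  toEquiv := Fin.consEquiv fun _ ↦ M
  map_mul' x y := by ext i; cases i using Fin.cases <;> rfl

section PowerQuotient

variable {N S : Type*} [Group N] [Group S] [IsSimpleGroup S]

theorem MonoidHom.ker_eq_top_or_nonempty_quotient_ker_mulEquiv (f : N →* S)
    (hf : f.range.Normal) : f.ker = ⊤ ∨ Nonempty (N ⧸ f.ker ≃* S) := by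
  rcases hf.eq_bot_or_eq_top with h | h
  · exact .inl (MonoidHom.range_eq_bot_iff.mp h ▸ MonoidHom.ker_one)
  · exact .inr ⟨quotientKerEquivOfSurjective f (MonoidHom.range_eq_top.mp h)⟩

theorem exists_quotient_inf_mulEquiv_pi {A L : Subgroup N} [A.Normal] [L.Normal]
    (hA : A = ⊤ ∨ Nonempty (N ⧸ A ≃* S)) {r : ℕ} (e : N ⧸ L ≃* (Fin r → S)) :
    ∃ r', Nonempty (N ⧸ (A ⊓ L) ≃* (Fin r' → S)) := by
  obtain rfl | ⟨⟨eA⟩⟩ := hA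
  · exact ⟨r, ⟨(quotientMulEquivOfEq (top_inf_eq L)).trans e⟩⟩
  by_cases hLA : L ≤ A
  · exact ⟨r, ⟨(quotientMulEquivOfEq (inf_eq_right.mpr hLA)).trans e⟩⟩
  have : IsSimpleGroup (N ⧸ A) := eA.isSimpleGroup
  exact ⟨r + 1, ⟨(quotientInfEquivProdOfSupEqTop A L (sup_eq_top_of_not_le hLA)).trans
    ((eA.prodCongr e).trans (MulEquiv.finCons r S))⟩⟩

theorem exists_quotient_iInf_mulEquiv_pi {ι : Type*} [Finite ι] (K : ι → Subgroup N)
    [∀ i, (K i).Normal] (hK : ∀ i, K i = ⊤ ∨ Nonempty (N ⧸ K i ≃* S)) :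
    ∃ r, Nonempty (N ⧸ ⨅ i, K i ≃* (Fin r → S)) := by
  classical
  have := Fintype.ofFinite ι
  suffices ∀ s : Finset ι, ∃ r, Nonempty (N ⧸ ⨅ i ∈ s, K i ≃* (Fin r → S)) by
    obtain ⟨r, ⟨e⟩⟩ := this Finset.univ
    exact ⟨r, ⟨(quotientMulEquivOfEq (by simp)).trans e⟩⟩
  intro s
  induction s using Finset.induction_on with
  | empty =>
    exact ⟨0, ⟨(quotientMulEquivOfEq (by simp)).trans
      (quotientKerEquivOfSurjective (1 : N →* (Fin 0 → S)) fun _ ↦ ⟨1, Subsingleton.elim _ _⟩)⟩⟩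
  | insert a s _ ih =>
    obtain ⟨r, ⟨e⟩⟩ := ih
    obtain ⟨r', ⟨e'⟩⟩ := exists_quotient_inf_mulEquiv_pi (hK a) e
    exact ⟨r', ⟨(quotientMulEquivOfEq (Finset.iInf_insert a s K)).trans e'⟩⟩

end PowerQuotient

namespace Subgroup

variable {G : Type*} [Group G] (H₁ H₂ : Subgroup G) [(H₁.subgroupOf H₂).Normal]

def conjNormalCoreToQuotient (g : G) : H₂.normalCore →* H₂ ⧸ H₁.subgroupOf H₂ :=
  (mk' _).comp ((inclusion H₂.normalCore_le).comp (MulAut.conjNormal g).toMonoidHom)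

theorem mem_ker_conjNormalCoreToQuotient {g : G} {x : H₂.normalCore} :
    x ∈ (conjNormalCoreToQuotient H₁ H₂ g).ker ↔ g * x * g⁻¹ ∈ H₁ := by
  simp [conjNormalCoreToQuotient, mem_subgroupOf]

theorem iInf_ker_conjNormalCoreToQuotient :
    ⨅ g, (conjNormalCoreToQuotient H₁ H₂ g).ker = H₁.normalCore.subgroupOf H₂.normalCore := by
  ext x
  simp only [mem_iInf, mem_ker_conjNormalCoreToQuotient, mem_subgroupOf]
  rfl

theorem normal_range_conjNormalCoreToQuotient (g : G) :
    (conjNormalCoreToQuotient H₁ H₂ g).range.Normal := by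
  have hrange : (conjNormalCoreToQuotient H₁ H₂ g).range
      = (H₂.normalCore.subgroupOf H₂).map (mk' _) := by
    rw [conjNormalCoreToQuotient, MonoidHom.range_comp, MonoidHom.range_comp,
      MonoidHom.range_eq_top.mpr (MulEquiv.surjective _), ← MonoidHom.range_eq_map,
      inclusion_range]
  rw [hrange]
  exact (normalCore_normal H₂).subgroupOf H₂ |>.map _ (mk'_surjective _)

end Subgroup

theorem stmt_10_general {G : Type*} [Group G] [Finite G] (H₁ H₂ : Subgroup G)
    [(H₁.subgroupOf H₂).Normal]
    [IsSimpleGroup (H₂ ⧸ H₁.subgroupOf H₂)] :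
    haveI : ((H₁.normalCore).subgroupOf H₂.normalCore).Normal :=
      Subgroup.Normal.subgroupOf (Subgroup.normalCore_normal H₁) _
    ∃ r : ℕ, Nonempty ((H₂.normalCore ⧸ (H₁.normalCore).subgroupOf H₂.normalCore)
      ≃* (Fin r → (H₂ ⧸ H₁.subgroupOf H₂))) := by
  obtain ⟨r, ⟨e⟩⟩ := exists_quotient_iInf_mulEquiv_pi _ fun g ↦
    (conjNormalCoreToQuotient H₁ H₂ g).ker_eq_top_or_nonempty_quotient_ker_mulEquiv
      (normal_range_conjNormalCoreToQuotient H₁ H₂ g)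
  exact ⟨r, ⟨(quotientMulEquivOfEq (iInf_ker_conjNormalCoreToQuotient H₁ H₂).symm).trans e⟩⟩

theorem stmt_10 {G : Type*} [Group G] [Finite G] (H₁ H₂ : Subgroup G)
    (h12 : H₁ ≤ H₂) [(H₁.subgroupOf H₂).Normal]
    [IsSimpleGroup (H₂ ⧸ H₁.subgroupOf H₂)] :
    haveI : ((H₁.normalCore).subgroupOf H₂.normalCore).Normal :=
      Subgroup.Normal.subgroupOf (Subgroup.normalCore_normal H₁) _
    ∃ r : ℕ, Nonempty ((H₂.normalCore ⧸ (H₁.normalCore).subgroupOf H₂.normalCore)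
      ≃* (Fin r → (H₂ ⧸ H₁.subgroupOf H₂))) :=
  stmt_10_general H₁ H₂
end

section
/- Let Ω be a finite set with |Ω| ≥ 4 and let g be a non-identity element of Alt(Ω). Then there exists h ∈ Alt(Ω) such that the commutator [g, h] = g⁻¹h⁻¹gh is either a 3-cycle or the product of two disjoint transpositions. -/
open Equiv Equiv.Perm

private lemma comm_of_key {G : Type*} [Group G] (g h t : G) (key : g * h = h * g * t) :
    g⁻¹ * h⁻¹ * g * h = t := by
  have h1 : g⁻¹ * h⁻¹ * g * h = g⁻¹ * h⁻¹ * (g * h) := by group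
  rw [h1, key]; group

private lemma comm_chain4 {Ω : Type*} [DecidableEq Ω] (g : Equiv.Perm Ω) (a b c d : Ω)
    (hab : a ≠ b) (hac : a ≠ c) (had : a ≠ d) (hbc : b ≠ c) (hbd : b ≠ d) (hcd : c ≠ d)
    (h1 : g a = b) (h2 : g b = c) (h3 : g c = d) :
    g⁻¹ * (Equiv.swap b c * Equiv.swap c d)⁻¹ * g * (Equiv.swap b c * Equiv.swap c d)
      = Equiv.swap a c * Equiv.swap c d := by
  apply comm_of_key
  ext x
  simp only [Equiv.Perm.mul_apply]
  rcases eq_or_ne x a with rfl | hxa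
  · simp [Equiv.swap_apply_of_ne_of_ne, Equiv.swap_apply_def, hab, hac, had, hbc, hbd, hcd,
      hab.symm, hac.symm, had.symm, hbc.symm, hbd.symm, hcd.symm, h1, h2, h3]
  rcases eq_or_ne x b with rfl | hxb
  · simp [Equiv.swap_apply_def, hab, hac, had, hbc, hbd, hcd,
      hab.symm, hac.symm, had.symm, hbc.symm, hbd.symm, hcd.symm, h1, h2, h3]
  rcases eq_or_ne x c with rfl | hxc
  · have f1 : g d ≠ b := fun hh => had (g.injective (hh.trans h1.symm)).symm
    have f2 : g d ≠ x := fun hh => hbd (g.injective (hh.trans h2.symm)).symm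
    have f3 : g d ≠ d := fun hh => hcd (g.injective (hh.trans h3.symm)).symm
    simp [Equiv.swap_apply_def, hab, hac, had, hbc, hbd, hcd, f1, f2, f3,
      hab.symm, hac.symm, had.symm, hbc.symm, hbd.symm, hcd.symm, h1, h2, h3]
  rcases eq_or_ne x d with rfl | hxd
  · simp [Equiv.swap_apply_def, hab, hac, had, hbc, hbd, hcd,
      hab.symm, hac.symm, had.symm, hbc.symm, hbd.symm, hcd.symm, h1, h2, h3]
  have e1 : g x ≠ b := fun hh => hxa (g.injective (hh.trans h1.symm))
  have e2 : g x ≠ c := fun hh => hxb (g.injective (hh.trans h2.symm))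
  have e3 : g x ≠ d := fun hh => hxc (g.injective (hh.trans h3.symm))
  simp [Equiv.swap_apply_def, hxa, hxb, hxc, hxd, e1, e2, e3]

private lemma comm_invol {Ω : Type*} [DecidableEq Ω] (g : Equiv.Perm Ω) (a b c d : Ω)
    (hab : a ≠ b) (hac : a ≠ c) (had : a ≠ d) (hbc : b ≠ c) (hbd : b ≠ d) (hcd : c ≠ d)
    (hga : g a = b) (hgb : g b = a) (hgc : g c = d) (hgd : g d = c) :
    g⁻¹ * (Equiv.swap a b * Equiv.swap b c)⁻¹ * g * (Equiv.swap a b * Equiv.swap b c) = Equiv.swap a d * Equiv.swap b c := by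
  apply comm_of_key
  ext x
  simp only [Equiv.Perm.mul_apply]
  rcases eq_or_ne x a with rfl | hxa
  · simp [Equiv.swap_apply_def, hab, hab.symm, hac, hac.symm, had, had.symm, hbc, hbc.symm, hbd, hbd.symm, hcd, hcd.symm, hga, hgb, hgc, hgd]
  rcases eq_or_ne x b with rfl | hxb
  · simp [Equiv.swap_apply_def, hab, hab.symm, hac, hac.symm, had, had.symm, hbc, hbc.symm, hbd, hbd.symm, hcd, hcd.symm, hga, hgb, hgc, hgd]
  rcases eq_or_ne x c with rfl | hxc
  · simp [Equiv.swap_apply_def, hab, hab.symm, hac, hac.symm, had, had.symm, hbc, hbc.symm, hbd, hbd.symm, hcd, hcd.symm, hga, hgb, hgc, hgd]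
  rcases eq_or_ne x d with rfl | hxd
  · simp [Equiv.swap_apply_def, hab, hab.symm, hac, hac.symm, had, had.symm, hbc, hbc.symm, hbd, hbd.symm, hcd, hcd.symm, hga, hgb, hgc, hgd]
  have ea : g x ≠ a := fun hh => hxb (g.injective (hh.trans hgb.symm))
  have eb : g x ≠ b := fun hh => hxa (g.injective (hh.trans hga.symm))
  have ec : g x ≠ c := fun hh => hxd (g.injective (hh.trans hgd.symm))
  simp [Equiv.swap_apply_def, hxa, hxb, hxc, hxd, ea, eb, ec]

private lemma comm_three_fixed {Ω : Type*} [DecidableEq Ω] (g : Equiv.Perm Ω) (a b c d : Ω)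
    (hab : a ≠ b) (hac : a ≠ c) (had : a ≠ d) (hbc : b ≠ c) (hbd : b ≠ d) (hcd : c ≠ d)
    (hga : g a = b) (hgb : g b = c) (hgc : g c = a) (hgd : g d = d) :
    g⁻¹ * (Equiv.swap a b * Equiv.swap b d)⁻¹ * g * (Equiv.swap a b * Equiv.swap b d) = Equiv.swap a b * Equiv.swap c d := by
  apply comm_of_key
  ext x
  simp only [Equiv.Perm.mul_apply]
  rcases eq_or_ne x a with rfl | hxa
  · simp [Equiv.swap_apply_def, hab, hab.symm, hac, hac.symm, had, had.symm, hbc, hbc.symm, hbd, hbd.symm, hcd, hcd.symm, hga, hgb, hgc, hgd]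
  rcases eq_or_ne x b with rfl | hxb
  · simp [Equiv.swap_apply_def, hab, hab.symm, hac, hac.symm, had, had.symm, hbc, hbc.symm, hbd, hbd.symm, hcd, hcd.symm, hga, hgb, hgc, hgd]
  rcases eq_or_ne x c with rfl | hxc
  · simp [Equiv.swap_apply_def, hab, hab.symm, hac, hac.symm, had, had.symm, hbc, hbc.symm, hbd, hbd.symm, hcd, hcd.symm, hga, hgb, hgc, hgd]
  rcases eq_or_ne x d with rfl | hxd
  · simp [Equiv.swap_apply_def, hab, hab.symm, hac, hac.symm, had, had.symm, hbc, hbc.symm, hbd, hbd.symm, hcd, hcd.symm, hga, hgb, hgc, hgd]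
  have ea : g x ≠ a := fun hh => hxc (g.injective (hh.trans hgc.symm))
  have eb : g x ≠ b := fun hh => hxa (g.injective (hh.trans hga.symm))
  have ed : g x ≠ d := fun hh => hxd (g.injective (hh.trans hgd.symm))
  simp [Equiv.swap_apply_def, hxa, hxb, hxc, hxd, ea, eb, ed]

private lemma comm_three_two {Ω : Type*} [DecidableEq Ω] (g : Equiv.Perm Ω) (a b c d e : Ω)
    (hab : a ≠ b) (hac : a ≠ c) (had : a ≠ d) (hae : a ≠ e) (hbc : b ≠ c) (hbd : b ≠ d) (hbe : b ≠ e) (hcd : c ≠ d) (hce : c ≠ e) (hde : d ≠ e)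
    (hga : g a = b) (hgb : g b = c) (hgc : g c = a) (hgd : g d = e) (hge : g e = d) :
    g⁻¹ * (Equiv.swap d e * Equiv.swap e a)⁻¹ * g * (Equiv.swap d e * Equiv.swap e a) = Equiv.swap a e * Equiv.swap c d := by
  apply comm_of_key
  ext x
  simp only [Equiv.Perm.mul_apply]
  rcases eq_or_ne x a with rfl | hxa
  · simp [Equiv.swap_apply_def, hab, hab.symm, hac, hac.symm, had, had.symm, hae, hae.symm, hbc, hbc.symm, hbd, hbd.symm, hbe, hbe.symm, hcd, hcd.symm, hce, hce.symm, hde, hde.symm, hga, hgb, hgc, hgd, hge]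
  rcases eq_or_ne x b with rfl | hxb
  · simp [Equiv.swap_apply_def, hab, hab.symm, hac, hac.symm, had, had.symm, hae, hae.symm, hbc, hbc.symm, hbd, hbd.symm, hbe, hbe.symm, hcd, hcd.symm, hce, hce.symm, hde, hde.symm, hga, hgb, hgc, hgd, hge]
  rcases eq_or_ne x c with rfl | hxc
  · simp [Equiv.swap_apply_def, hab, hab.symm, hac, hac.symm, had, had.symm, hae, hae.symm, hbc, hbc.symm, hbd, hbd.symm, hbe, hbe.symm, hcd, hcd.symm, hce, hce.symm, hde, hde.symm, hga, hgb, hgc, hgd, hge]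
  rcases eq_or_ne x d with rfl | hxd
  · simp [Equiv.swap_apply_def, hab, hab.symm, hac, hac.symm, had, had.symm, hae, hae.symm, hbc, hbc.symm, hbd, hbd.symm, hbe, hbe.symm, hcd, hcd.symm, hce, hce.symm, hde, hde.symm, hga, hgb, hgc, hgd, hge]
  rcases eq_or_ne x e with rfl | hxe
  · simp [Equiv.swap_apply_def, hab, hab.symm, hac, hac.symm, had, had.symm, hae, hae.symm, hbc, hbc.symm, hbd, hbd.symm, hbe, hbe.symm, hcd, hcd.symm, hce, hce.symm, hde, hde.symm, hga, hgb, hgc, hgd, hge]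
  have ea : g x ≠ a := fun hh => hxc (g.injective (hh.trans hgc.symm))
  have ed : g x ≠ d := fun hh => hxe (g.injective (hh.trans hge.symm))
  have ee : g x ≠ e := fun hh => hxd (g.injective (hh.trans hgd.symm))
  simp [Equiv.swap_apply_def, hxa, hxb, hxc, hxd, hxe, ea, ed, ee]

private lemma comm_three_three {Ω : Type*} [DecidableEq Ω] (g : Equiv.Perm Ω) (a b c d e f : Ω)
    (hab : a ≠ b) (hac : a ≠ c) (had : a ≠ d) (hae : a ≠ e) (haf : a ≠ f) (hbc : b ≠ c) (hbd : b ≠ d) (hbe : b ≠ e) (hbf : b ≠ f) (hcd : c ≠ d) (hce : c ≠ e) (hcf : c ≠ f) (hde : d ≠ e) (hdf : d ≠ f) (hef : e ≠ f)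
    (hga : g a = b) (hgb : g b = c) (hgc : g c = a) (hgd : g d = e) (hge : g e = f) (hgf : g f = d) :
    g⁻¹ * (Equiv.swap a d * Equiv.swap b e)⁻¹ * g * (Equiv.swap a d * Equiv.swap b e) = Equiv.swap b e * Equiv.swap c f := by
  apply comm_of_key
  ext x
  simp only [Equiv.Perm.mul_apply]
  rcases eq_or_ne x a with rfl | hxa
  · simp [Equiv.swap_apply_def, hab, hab.symm, hac, hac.symm, had, had.symm, hae, hae.symm, haf, haf.symm, hbc, hbc.symm, hbd, hbd.symm, hbe, hbe.symm, hbf, hbf.symm, hcd, hcd.symm, hce, hce.symm, hcf, hcf.symm, hde, hde.symm, hdf, hdf.symm, hef, hef.symm, hga, hgb, hgc, hgd, hge, hgf]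
  rcases eq_or_ne x b with rfl | hxb
  · simp [Equiv.swap_apply_def, hab, hab.symm, hac, hac.symm, had, had.symm, hae, hae.symm, haf, haf.symm, hbc, hbc.symm, hbd, hbd.symm, hbe, hbe.symm, hbf, hbf.symm, hcd, hcd.symm, hce, hce.symm, hcf, hcf.symm, hde, hde.symm, hdf, hdf.symm, hef, hef.symm, hga, hgb, hgc, hgd, hge, hgf]
  rcases eq_or_ne x c with rfl | hxc
  · simp [Equiv.swap_apply_def, hab, hab.symm, hac, hac.symm, had, had.symm, hae, hae.symm, haf, haf.symm, hbc, hbc.symm, hbd, hbd.symm, hbe, hbe.symm, hbf, hbf.symm, hcd, hcd.symm, hce, hce.symm, hcf, hcf.symm, hde, hde.symm, hdf, hdf.symm, hef, hef.symm, hga, hgb, hgc, hgd, hge, hgf]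
  rcases eq_or_ne x d with rfl | hxd
  · simp [Equiv.swap_apply_def, hab, hab.symm, hac, hac.symm, had, had.symm, hae, hae.symm, haf, haf.symm, hbc, hbc.symm, hbd, hbd.symm, hbe, hbe.symm, hbf, hbf.symm, hcd, hcd.symm, hce, hce.symm, hcf, hcf.symm, hde, hde.symm, hdf, hdf.symm, hef, hef.symm, hga, hgb, hgc, hgd, hge, hgf]
  rcases eq_or_ne x e with rfl | hxe
  · simp [Equiv.swap_apply_def, hab, hab.symm, hac, hac.symm, had, had.symm, hae, hae.symm, haf, haf.symm, hbc, hbc.symm, hbd, hbd.symm, hbe, hbe.symm, hbf, hbf.symm, hcd, hcd.symm, hce, hce.symm, hcf, hcf.symm, hde, hde.symm, hdf, hdf.symm, hef, hef.symm, hga, hgb, hgc, hgd, hge, hgf]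
  rcases eq_or_ne x f with rfl | hxf
  · simp [Equiv.swap_apply_def, hab, hab.symm, hac, hac.symm, had, had.symm, hae, hae.symm, haf, haf.symm, hbc, hbc.symm, hbd, hbd.symm, hbe, hbe.symm, hbf, hbf.symm, hcd, hcd.symm, hce, hce.symm, hcf, hcf.symm, hde, hde.symm, hdf, hdf.symm, hef, hef.symm, hga, hgb, hgc, hgd, hge, hgf]
  have ea : g x ≠ a := fun hh => hxc (g.injective (hh.trans hgc.symm))
  have eb : g x ≠ b := fun hh => hxa (g.injective (hh.trans hga.symm))
  have ed : g x ≠ d := fun hh => hxf (g.injective (hh.trans hgf.symm))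
  have ee : g x ≠ e := fun hh => hxd (g.injective (hh.trans hgd.symm))
  simp [Equiv.swap_apply_def, hxa, hxb, hxc, hxd, hxe, hxf, ea, eb, ed, ee]


private lemma mem_alt_sw {Ω : Type*} [Fintype Ω] [DecidableEq Ω] {x y u v : Ω}
    (h1 : x ≠ y) (h2 : u ≠ v) : Equiv.swap x y * Equiv.swap u v ∈ alternatingGroup Ω := by
  rw [Equiv.Perm.mem_alternatingGroup, map_mul, Equiv.Perm.sign_swap h1, Equiv.Perm.sign_swap h2]
  decide

private lemma exists_fresh3 {Ω : Type*} [Fintype Ω] [DecidableEq Ω]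
    (h : 4 ≤ Fintype.card Ω) (a b c : Ω) : ∃ d, d ≠ a ∧ d ≠ b ∧ d ≠ c := by
  have h3 : ({a, b, c} : Finset Ω).card ≤ 3 := by
    refine le_trans (Finset.card_insert_le _ _) ?_
    have := Finset.card_insert_le b ({c} : Finset Ω)
    simp only [Finset.card_singleton] at this
    omega
  have hne : (({a, b, c} : Finset Ω)ᶜ).Nonempty := by
    rw [← Finset.card_pos, Finset.card_compl]
    omega
  obtain ⟨d, hd⟩ := hne
  simp only [Finset.mem_compl, Finset.mem_insert, Finset.mem_singleton, not_or] at hd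
  exact ⟨d, hd.1, hd.2.1, hd.2.2⟩

theorem stmt_13 {Ω : Type*} [Fintype Ω] [DecidableEq Ω] (hΩ : 4 ≤ Fintype.card Ω)
    (g : Equiv.Perm Ω) (hg : g ∈ alternatingGroup Ω) (hg1 : g ≠ 1) :
    ∃ h ∈ alternatingGroup Ω,
      (g⁻¹ * h⁻¹ * g * h).IsThreeCycle ∨
        ∃ a b c d : Ω, a ≠ b ∧ a ≠ c ∧ a ≠ d ∧ b ≠ c ∧ b ≠ d ∧ c ≠ d ∧
          g⁻¹ * h⁻¹ * g * h = Equiv.swap a b * Equiv.swap c d := by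
  classical
  obtain ⟨a, ha⟩ : ∃ a, g a ≠ a := by
    by_contra hcon
    push_neg at hcon
    exact hg1 (Equiv.ext fun x => by simpa using hcon x)
  by_cases H : ∃ x, g x ≠ x ∧ g (g x) ≠ x
  · clear ha a
    obtain ⟨a, ha, ha2⟩ := H
    obtain ⟨b, hgab⟩ : ∃ b, g a = b := ⟨_, rfl⟩
    rw [hgab] at ha ha2
    -- ha : b ≠ a, ha2 : g b ≠ a
    obtain ⟨c, hgbc⟩ : ∃ c, g b = c := ⟨_, rfl⟩
    rw [hgbc] at ha2
    have hba : b ≠ a := ha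
    have hca : c ≠ a := ha2
    have hcb : c ≠ b := fun h => hba (g.injective (show g b = g a by rw [hgbc, hgab, h]))
    by_cases h3 : g c = a
    · by_cases H2 : ∃ d, d ≠ a ∧ d ≠ b ∧ d ≠ c ∧ g d ≠ d
      · obtain ⟨d, hda, hdb, hdc, hd⟩ := H2
        obtain ⟨e, hgde⟩ : ∃ e, g d = e := ⟨_, rfl⟩
        rw [hgde] at hd
        have hed : e ≠ d := hd
        have hea : e ≠ a := fun h => hdc (g.injective (show g d = g c by rw [hgde, h3, h]))
        have heb : e ≠ b := fun h => hda (g.injective (show g d = g a by rw [hgde, hgab, h]))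
        have hec : e ≠ c := fun h => hdb (g.injective (show g d = g b by rw [hgde, hgbc, h]))
        by_cases h5 : g e = d
        · refine ⟨Equiv.swap d e * Equiv.swap e a, mem_alt_sw hed.symm hea, Or.inr
            ⟨a, e, c, d, hea.symm, hca.symm, hda.symm, hec, hed, hdc.symm, ?_⟩⟩
          exact comm_three_two g a b c d e hba.symm hca.symm hda.symm hea.symm hcb.symm
            hdb.symm heb.symm hdc.symm hec.symm hed.symm hgab hgbc h3 hgde h5
        · obtain ⟨f, hgef⟩ : ∃ f, g e = f := ⟨_, rfl⟩
          rw [hgef] at h5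
          have hfd : f ≠ d := h5
          have hfe : f ≠ e := fun h => hed (g.injective (show g e = g d by rw [hgef, hgde, h]))
          have hfa : f ≠ a := fun h => hec (g.injective (show g e = g c by rw [hgef, h3, h]))
          have hfb : f ≠ b := fun h => hea (g.injective (show g e = g a by rw [hgef, hgab, h]))
          have hfc : f ≠ c := fun h => heb (g.injective (show g e = g b by rw [hgef, hgbc, h]))
          by_cases h6 : g f = d
          · refine ⟨Equiv.swap a d * Equiv.swap b e, mem_alt_sw hda.symm heb.symm, Or.inr
              ⟨b, e, c, f, heb.symm, hcb.symm, hfb.symm, hec, hfe.symm, hfc.symm, ?_⟩⟩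
            exact comm_three_three g a b c d e f hba.symm hca.symm hda.symm hea.symm hfa.symm
              hcb.symm hdb.symm heb.symm hfb.symm hdc.symm hec.symm hfc.symm hed.symm
              hfd.symm hfe.symm hgab hgbc h3 hgde hgef h6
          · obtain ⟨w, hgfw⟩ : ∃ w, g f = w := ⟨_, rfl⟩
            rw [hgfw] at h6
            have hwd : w ≠ d := h6
            have hwe : w ≠ e := fun h => hfd (g.injective (show g f = g d by rw [hgfw, hgde, h]))
            have hwf : w ≠ f := fun h => hfe (g.injective (show g f = g e by rw [hgfw, hgef, h]))
            refine ⟨Equiv.swap e f * Equiv.swap f w, mem_alt_sw hfe.symm hwf.symm, Or.inl ?_⟩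
            rw [comm_chain4 g d e f w hed.symm hfd.symm hwd.symm hfe.symm hwe.symm hwf.symm
              hgde hgef hgfw, Equiv.swap_comm d f]
            exact Equiv.Perm.isThreeCycle_swap_mul_swap_same hfd hwf.symm hwd.symm
      · push_neg at H2
        obtain ⟨d, hda, hdb, hdc⟩ := exists_fresh3 hΩ a b c
        have hgd : g d = d := H2 d hda hdb hdc
        refine ⟨Equiv.swap a b * Equiv.swap b d, mem_alt_sw hba.symm hdb.symm, Or.inr
          ⟨a, b, c, d, hba.symm, hca.symm, hda.symm, hcb.symm, hdb.symm, hdc.symm, ?_⟩⟩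
        exact comm_three_fixed g a b c d hba.symm hca.symm hda.symm hcb.symm hdb.symm
          hdc.symm hgab hgbc h3 hgd
    · obtain ⟨d, hgcd⟩ : ∃ d, g c = d := ⟨_, rfl⟩
      rw [hgcd] at h3
      have hda : d ≠ a := h3
      have hdb : d ≠ b := fun h => hca (g.injective (show g c = g a by rw [hgcd, hgab, h]))
      have hdc : d ≠ c := fun h => hcb (g.injective (show g c = g b by rw [hgcd, hgbc, h]))
      refine ⟨Equiv.swap b c * Equiv.swap c d, mem_alt_sw hcb.symm hdc.symm, Or.inl ?_⟩
      rw [comm_chain4 g a b c d hba.symm hca.symm hda.symm hcb.symm hdb.symm hdc.symm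
        hgab hgbc hgcd, Equiv.swap_comm a c]
      exact Equiv.Perm.isThreeCycle_swap_mul_swap_same hca hdc.symm hda.symm
  · push_neg at H
    obtain ⟨b, hgab⟩ : ∃ b, g a = b := ⟨_, rfl⟩
    rw [hgab] at ha
    have hba : b ≠ a := ha
    have hgba : g b = a := by
      have := H a (by rw [hgab]; exact hba)
      rwa [hgab] at this
    obtain ⟨c, hca, hcb, hc⟩ : ∃ c, c ≠ a ∧ c ≠ b ∧ g c ≠ c := by
      by_contra hcon
      push_neg at hcon
      have hswap : g = Equiv.swap a b := by
        ext x
        rcases eq_or_ne x a with rfl | hxa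
        · rw [hgab, Equiv.swap_apply_left]
        rcases eq_or_ne x b with rfl | hxb
        · rw [hgba, Equiv.swap_apply_right]
        · rw [hcon x hxa hxb, Equiv.swap_apply_of_ne_of_ne hxa hxb]
      rw [Equiv.Perm.mem_alternatingGroup, hswap, Equiv.Perm.sign_swap hba.symm] at hg
      exact absurd hg (by decide)
    obtain ⟨d, hgcd⟩ : ∃ d, g c = d := ⟨_, rfl⟩
    have hgdc : g d = c := by
      have := H c hc
      rwa [hgcd] at this
    rw [hgcd] at hc
    have hdc : d ≠ c := hc
    have hda : d ≠ a := fun h => hcb (g.injective (show g c = g b by rw [hgcd, hgba, h]))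
    have hdb : d ≠ b := fun h => hca (g.injective (show g c = g a by rw [hgcd, hgab, h]))
    refine ⟨Equiv.swap a b * Equiv.swap b c, mem_alt_sw hba.symm hcb.symm, Or.inr
      ⟨a, d, b, c, hda.symm, hba.symm, hca.symm, hdb, hdc, hcb.symm, ?_⟩⟩
    exact comm_invol g a b c d hba.symm hca.symm hda.symm hcb.symm hdb.symm hdc.symm
      hgab hgba hgcd hgdc
end

section
/- Let n ≥ 5. Every element of Alt(n) can be written as a product of at most (n+1)/2 permutations each of which is a product of two disjoint transpositions. -/
/-!
Induct on the size of the support of an even permutation `g`. If the support has at least four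
points, pick `a` in it and `c` in it outside `{a, g a, g⁻¹ a}`; then `(a g a)(c g c) * g` fixes
`a`, `c` and every point fixed by `g`, so one double transposition shrinks the support by two.
Otherwise `g` is `1` or a 3-cycle `(a b c)`, and a 3-cycle is `(a b)(x y) * (x y)(b c)` for
any two points `x`, `y` outside its support, which exist since `n ≥ 5`.
-/

open Finset

namespace Equiv.Perm

variable {α : Type*} [DecidableEq α]

def IsDoubleTransposition (σ : Perm α) : Prop :=
  ∃ a b c d : α, a ≠ b ∧ a ≠ c ∧ a ≠ d ∧ b ≠ c ∧ b ≠ d ∧ c ≠ d ∧ σ = swap a b * swap c d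

theorem IsDoubleTransposition.inv {σ : Perm α} (hσ : σ.IsDoubleTransposition) :
    σ⁻¹.IsDoubleTransposition := by
  obtain ⟨a, b, c, d, hab, hac, had, hbc, hbd, hcd, rfl⟩ := hσ
  exact ⟨c, d, a, b, hcd, hac.symm, hbc.symm, had.symm, hbd.symm, hab, by simp⟩

variable [Fintype α]

theorem IsDoubleTransposition.mem_alternatingGroup {σ : Perm α}
    (hσ : σ.IsDoubleTransposition) : σ ∈ alternatingGroup α := by
  obtain ⟨a, b, c, d, hab, -, -, -, -, hcd, rfl⟩ := hσ
  simp [Perm.mem_alternatingGroup, sign_swap hab, sign_swap hcd]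

theorem exists_mem_support_of_four_le_card_support {g : Perm α} (hg : 4 ≤ #g.support) :
    ∃ a ∈ g.support, ∃ c ∈ g.support, a ≠ c ∧ g a ≠ c ∧ g c ≠ a := by
  obtain ⟨a, ha⟩ := card_pos.mp (by omega : 0 < #g.support)
  obtain ⟨c, hc⟩ : (g.support \ {a, g a, g⁻¹ a}).Nonempty := by
    rw [← card_pos]
    have := le_card_sdiff {a, g a, g⁻¹ a} g.support
    have := card_le_three (a := a) (b := g a) (c := g⁻¹ a)
    omega
  simp only [mem_sdiff, mem_insert, mem_singleton, not_or] at hc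
  obtain ⟨hc, hca, hcga, hcgia⟩ := hc
  exact ⟨a, ha, c, hc, Ne.symm hca, Ne.symm hcga, fun h => hcgia (eq_inv_iff_eq.mpr h)⟩

theorem card_support_swap_mul_swap_mul_add_two_le {g : Perm α} {a c : α}
    (ha : a ∈ g.support) (hc : c ∈ g.support) (hac : a ≠ c) (hgac : g a ≠ c) :
    #(swap a (g a) * swap c (g c) * g).support + 2 ≤ #g.support := by
  set h := swap c (g c) * g
  have hha : h a = g a := swap_apply_of_ne_of_ne hgac (g.injective.ne hac)
  have hsub : (swap a (h a) * h).support ⊆ g.support \ {a, c} := by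
    intro x hx
    obtain ⟨hxh, hxa⟩ := mem_support_swap_mul_imp_mem_support_ne hx
    obtain ⟨hxg, hxc⟩ := mem_support_swap_mul_imp_mem_support_ne hxh
    simp [hxg, hxa, hxc]
  have hac_sub : {a, c} ⊆ g.support := by simp [insert_subset_iff, ha, hc]
  rw [hha, ← mul_assoc] at hsub
  have := card_le_card hsub
  have := card_le_card hac_sub
  rw [card_sdiff_of_subset hac_sub, card_pair hac] at *
  omega

theorem IsThreeCycle.exists_isDoubleTransposition_mul_eq {g : Perm α} (hg : g.IsThreeCycle)
    (hα : 5 ≤ Fintype.card α) :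
    ∃ σ τ : Perm α, σ.IsDoubleTransposition ∧ τ.IsDoubleTransposition ∧ σ * τ = g := by
  obtain ⟨a, ha⟩ := card_pos.mp (hg.card_support ▸ three_pos : 0 < #g.support)
  obtain ⟨x, hx, y, hy, hxy⟩ : ∃ x ∈ g.supportᶜ, ∃ y ∈ g.supportᶜ, x ≠ y := by
    rw [← one_lt_card, card_compl, hg.card_support]
    omega
  have hnodup := hg.nodup_iff_mem_support.mpr ha
  rw [mem_compl, hg.support_eq_iff_mem_support.mpr ha] at hx hy
  refine ⟨swap a (g a) * swap x y, swap x y * swap (g a) (g (g a)),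
    ⟨a, g a, x, y, ?_⟩, ⟨x, y, g a, g (g a), ?_⟩, ?_⟩
  · grind
  · grind
  · rw [mul_assoc, ← mul_assoc (swap x y), swap_mul_self, one_mul,
      ← hg.eq_swap_mul_swap_iff_mem_support.mpr ha]

theorem exists_list_isDoubleTransposition_prod_eq (hα : 5 ≤ Fintype.card α) {g : Perm α}
    (hg : g ∈ alternatingGroup α) :
    ∃ L : List (Perm α), L.length ≤ (#g.support + 1) / 2 ∧
      (∀ σ ∈ L, σ.IsDoubleTransposition) ∧ L.prod = g := by
  induction hs : #g.support using Nat.strong_induction_on generalizing g with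
  | _ s IH =>
  rcases le_or_gt 4 s with h4 | h3
  · obtain ⟨a, ha, c, hc, hac, hgac, hgca⟩ := exists_mem_support_of_four_le_card_support (hs ▸ h4)
    set σ := swap a (g a) * swap c (g c)
    have hσ : σ.IsDoubleTransposition :=
      ⟨a, g a, c, g c, Ne.symm (mem_support.mp ha), hac, Ne.symm hgca, hgac,
        g.injective.ne hac, Ne.symm (mem_support.mp hc), rfl⟩
    have hcard : #(σ * g).support + 2 ≤ s :=
      hs ▸ card_support_swap_mul_swap_mul_add_two_le ha hc hac hgac
    obtain ⟨L, hlen, hL, hprod⟩ :=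
      IH _ (by omega) (mul_mem hσ.mem_alternatingGroup hg) rfl
    refine ⟨σ⁻¹ :: L, by simp only [List.length_cons]; omega, ?_, by simp [hprod]⟩
    simpa [hσ.inv] using hL
  · interval_cases s
    · exact ⟨[], by simp, by simp, (card_support_eq_zero.mp hs).symm⟩
    · exact absurd hs (card_support_ne_one g)
    · rw [Perm.mem_alternatingGroup, (card_support_eq_two.mp hs).sign_eq] at hg
      exact absurd hg (by decide)
    · obtain ⟨σ, τ, hσ, hτ, rfl⟩ :=
        (card_support_eq_three_iff.mp hs).exists_isDoubleTransposition_mul_eq hα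
      exact ⟨[σ, τ], by simp, by simp [hσ, hτ], by simp⟩

end Equiv.Perm

theorem stmt_15 (n : ℕ) (hn : 5 ≤ n) (g : Equiv.Perm (Fin n))
    (hg : g ∈ alternatingGroup (Fin n)) :
    ∃ L : List (Equiv.Perm (Fin n)), L.length ≤ (n + 1) / 2 ∧
      (∀ σ ∈ L, ∃ a b c d : Fin n, a ≠ b ∧ a ≠ c ∧ a ≠ d ∧ b ≠ c ∧ b ≠ d ∧ c ≠ d ∧
        σ = Equiv.swap a b * Equiv.swap c d) ∧ L.prod = g := by
  obtain ⟨L, hlen, hL, hprod⟩ :=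
    Equiv.Perm.exists_list_isDoubleTransposition_prod_eq (by simpa using hn) hg
  have hsupp : #g.support ≤ n := by simpa using card_le_univ g.support
  exact ⟨L, hlen.trans (Nat.div_le_div_right (by omega)), hL, hprod⟩
end

section
/- Let G = (ℤ/pℤ)^n, the direct product of n copies of the cyclic group of prime order p. Then for every generating set S of G, every element of G is a product of at most n·⌊p/2⌋ elements of S ∪ S⁻¹; i.e., diam(G) ≤ n·⌊p/2⌋. -/
/-!
Since `S` generates `G = (ℤ/pℤ)ⁿ` as a group, it spans it as an `𝔽ₚ`-vector space, so `S`
contains a basis `b₁, …, bₙ`. Write `x = ∑ cᵢ bᵢ` and lift each `cᵢ` to the representative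
`mᵢ ∈ ℤ` of least absolute value, so `|mᵢ| ≤ ⌊p/2⌋`; then `mᵢ bᵢ` is a sum of `|mᵢ|` copies of
`bᵢ` or of `-bᵢ`.
-/

open Pointwise

variable {M : Type*}

def IsSumOfAtMost [AddMonoid M] (T : Set M) (k : ℕ) (x : M) : Prop :=
  ∃ L : List M, L.length ≤ k ∧ (∀ a ∈ L, a ∈ T) ∧ L.sum = x

namespace IsSumOfAtMost

section AddMonoid

variable [AddMonoid M] {T T' : Set M} {k l : ℕ} {x y : M}

theorem mono (hx : IsSumOfAtMost T k x) (hT : T ⊆ T') (hkl : k ≤ l) :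
    IsSumOfAtMost T' l x :=
  let ⟨L, hlen, hmem, hsum⟩ := hx
  ⟨L, hlen.trans hkl, fun a ha => hT (hmem a ha), hsum⟩

theorem zero (T : Set M) (k : ℕ) : IsSumOfAtMost T k 0 :=
  ⟨[], Nat.zero_le k, by simp, List.sum_nil⟩

theorem add (hx : IsSumOfAtMost T k x) (hy : IsSumOfAtMost T l y) :
    IsSumOfAtMost T (k + l) (x + y) := by
  obtain ⟨L, hL, hLT, rfl⟩ := hx
  obtain ⟨L', hL', hL'T, rfl⟩ := hy
  refine ⟨L ++ L', ?_, ?_, List.sum_append⟩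
  · rw [List.length_append]
    exact Nat.add_le_add hL hL'
  · intro a ha
    rcases List.mem_append.mp ha with ha | ha
    exacts [hLT a ha, hL'T a ha]

theorem nsmul {g : M} (hg : g ∈ T) (m : ℕ) : IsSumOfAtMost T m (m • g) :=
  ⟨List.replicate m g, (List.length_replicate).le,
    fun _ ha => (List.eq_of_mem_replicate ha) ▸ hg, List.sum_replicate m g⟩

end AddMonoid

theorem finset_sum [AddCommMonoid M] {T : Set M} {k : ℕ} {ι : Type*} (s : Finset ι)
    {f : ι → M} (hf : ∀ i ∈ s, IsSumOfAtMost T k (f i)) :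
    IsSumOfAtMost T (s.card * k) (∑ i ∈ s, f i) := by
  classical
  induction s using Finset.induction with
  | empty => simpa using zero T 0
  | insert i s hi ih =>
    rw [Finset.sum_insert hi, Finset.card_insert_of_notMem hi, Nat.succ_mul, Nat.add_comm]
    exact (hf i (Finset.mem_insert_self i s)).add
      (ih fun j hj => hf j (Finset.mem_insert_of_mem hj))

theorem zsmul [AddGroup M] (g : M) (m : ℤ) : IsSumOfAtMost {g, -g} m.natAbs (m • g) := by
  obtain ⟨k, rfl | rfl⟩ := Int.eq_nat_or_neg m
  · simpa using nsmul (Set.mem_insert g {-g}) k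
  · simpa using nsmul (Set.mem_insert_of_mem g (Set.mem_singleton (-g))) k

theorem zmod_smul [AddCommGroup M] {p : ℕ} [NeZero p] [Module (ZMod p) M] (c : ZMod p)
    (g : M) : IsSumOfAtMost {g, -g} (p / 2) (c • g) := by
  have hc : c • g = c.valMinAbs • g := by
    rw [← Int.cast_smul_eq_zsmul (ZMod p), ZMod.coe_valMinAbs]
  rw [hc]
  exact (zsmul g _).mono le_rfl (ZMod.natAbs_valMinAbs_le c)

end IsSumOfAtMost

theorem Submodule.span_zmod_eq_top_of_closure_eq_top [AddCommGroup M] {n : ℕ}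
    [Module (ZMod n) M] {S : Set M} (hS : AddSubgroup.closure S = ⊤) :
    Submodule.span (ZMod n) S = ⊤ := by
  have hle : AddSubgroup.closure S ≤ (Submodule.span (ZMod n) S).toAddSubgroup :=
    AddSubgroup.closure_le _ |>.mpr Submodule.subset_span
  rw [hS] at hle
  exact eq_top_iff.mpr fun y _ => hle (AddSubgroup.mem_top y)

theorem isSumOfAtMost_finrank_mul_of_closure_eq_top {p : ℕ} [Fact p.Prime] [AddCommGroup M]
    [Module (ZMod p) M] [FiniteDimensional (ZMod p) M] {S : Set M}
    (hS : AddSubgroup.closure S = ⊤) (x : M) :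
    IsSumOfAtMost (S ∪ -S) (Module.finrank (ZMod p) M * (p / 2)) x := by
  let b := Module.Basis.ofSpan (Submodule.span_zmod_eq_top_of_closure_eq_top (n := p) hS).ge
  have hbS : ∀ i, b i ∈ S := fun i => by
    rw [Module.Basis.coe_ofSpan]
    exact LinearIndepOn.extend_subset _ _ i.2
  have : Fintype _ := FiniteDimensional.fintypeBasisIndex b
  rw [Module.finrank_eq_card_basis b, ← b.sum_repr x]
  refine IsSumOfAtMost.finset_sum Finset.univ fun i _ => ?_
  refine (IsSumOfAtMost.zmod_smul _ _).mono ?_ le_rfl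
  rintro _ (rfl | rfl)
  exacts [Or.inl (hbS i), Or.inr (Set.neg_mem_neg.mpr (hbS i))]

theorem stmt_16_general (p n : ℕ) (hp : p.Prime)
    (S : Set (Fin n → ZMod p)) (hS : AddSubgroup.closure S = ⊤)
    (x : Fin n → ZMod p) :
    ∃ L : List (Fin n → ZMod p), L.length ≤ n * (p / 2) ∧
      (∀ a ∈ L, a ∈ S ∪ (-S)) ∧ L.sum = x := by
  have : Fact p.Prime := ⟨hp⟩
  simpa only [IsSumOfAtMost, Module.finrank_fin_fun] using isSumOfAtMost_finrank_mul_of_closure_eq_top (p := p) hS x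

theorem stmt_16 (p n : ℕ) (hp : p.Prime) (hn : 1 ≤ n)
    (S : Set (Fin n → ZMod p)) (hS : AddSubgroup.closure S = ⊤)
    (x : Fin n → ZMod p) :
    ∃ L : List (Fin n → ZMod p), L.length ≤ n * (p / 2) ∧
      (∀ a ∈ L, a ∈ S ∪ (-S)) ∧ L.sum = x :=
  stmt_16_general p n hp S hS x
end

section
/- Let G ≤ Sym(Ω) with |Ω| = n, let A ⊆ Sym(Ω), let 0 < ρ ≤ 1, and let α₁, …, α_k ∈ Ω be distinct points such that for every 1 ≤ j ≤ k the orbit of α_j under the pointwise stabilizer A_{(α₁,…,α_{j−1})} has size ≥ ρn. Then the set A^k sends the tuple (α₁,…,α_k) to at least (ρn)^k distinct k-tuples; in particular A^k intersects at least (ρn)^k right cosets of the pointwise stabilizer Sym(Ω)_{(α₁,…,α_k)}. -/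
open Pointwise

open Classical in
noncomputable def pick {α β : Type*} (S : Finset α) (F : α → β) (d : α) (b : β) : α :=
  if h : ∃ a ∈ S, F a = b then h.choose else d

theorem pick_spec {α β : Type*} {S : Finset α} {F : α → β} {d : α} {b : β}
    (h : ∃ a ∈ S, F a = b) : pick S F d b ∈ S ∧ F (pick S F d b) = b := by
  rw [pick, dif_pos h]
  exact ⟨h.choose_spec.1, h.choose_spec.2⟩

theorem aux18 {Ω : Type*} [Fintype Ω] [DecidableEq Ω]
    (A : Finset (Equiv.Perm Ω)) (r : ℝ) (hr : 0 ≤ r) (β : ℕ → Ω) :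
    ∀ m : ℕ, (∀ j < m, r ≤ (((A.filter fun g => ∀ i < j, g (β i) = β i).image
        fun g => g (β j)).card : ℝ)) →
    r ^ m ≤ (((A ^ m).image fun g => fun i : Fin m => g (β (i : ℕ))).card : ℝ) := by
  intro m
  induction m with
  | zero =>
    intro _
    simp
  | succ m ih =>
    intro h
    classical
    set Ftup : Equiv.Perm Ω → (Fin m → Ω) := fun g => fun i : Fin m => g (β (i : ℕ)) with hFtup
    set T : Finset (Fin m → Ω) := (A ^ m).image Ftup with hT
    set filt : Finset (Equiv.Perm Ω) := A.filter (fun g => ∀ i < m, g (β i) = β i) with hfilt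
    set O : Finset Ω := filt.image (fun g => g (β m)) with hO
    have hTcard : r ^ m ≤ (T.card : ℝ) := ih (fun j hj => h j (hj.trans (Nat.lt_succ_self m)))
    have hOcard : r ≤ (O.card : ℝ) := h m (Nat.lt_succ_self m)
    set S : Finset (Fin (m + 1) → Ω) :=
      (A ^ (m + 1)).image (fun g => fun i : Fin (m + 1) => g (β (i : ℕ))) with hS
    -- the injection
    set f : (Fin m → Ω) × Ω → (Fin (m + 1) → Ω) := fun p => fun i : Fin (m + 1) =>
      (pick (A ^ m) Ftup 1 p.1 * pick filt (fun g => g (β m)) 1 p.2) (β (i : ℕ)) with hf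
    have key : ∀ p ∈ T ×ˢ O,
        pick (A ^ m) Ftup 1 p.1 ∈ A ^ m ∧ Ftup (pick (A ^ m) Ftup 1 p.1) = p.1 ∧
        pick filt (fun g => g (β m)) 1 p.2 ∈ filt ∧
        (pick filt (fun g => g (β m)) 1 p.2) (β m) = p.2 := by
      intro p hp
      rw [Finset.mem_product] at hp
      obtain ⟨hp1, hp2⟩ := hp
      rw [hT, Finset.mem_image] at hp1
      rw [hO, Finset.mem_image] at hp2
      obtain ⟨g1, hg1, hg1'⟩ := hp1
      obtain ⟨g2, hg2, hg2'⟩ := hp2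
      have s1 := pick_spec (S := A ^ m) (F := Ftup) (d := 1) (b := p.1) ⟨g1, hg1, hg1'⟩
      have s2 := pick_spec (S := filt) (F := fun g => g (β m)) (d := 1) (b := p.2) ⟨g2, hg2, hg2'⟩
      exact ⟨s1.1, s1.2, s2.1, s2.2⟩
    have hmaps : ∀ p ∈ T ×ˢ O, f p ∈ S := by
      intro p hp
      obtain ⟨h1, _, h3, _⟩ := key p hp
      have : pick (A ^ m) Ftup 1 p.1 * pick filt (fun g => g (β m)) 1 p.2 ∈ A ^ (m + 1) := by
        rw [pow_succ]
        exact Finset.mul_mem_mul h1 (Finset.mem_of_mem_filter _ h3)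
      exact Finset.mem_image_of_mem _ this
    have hinj : Set.InjOn f (T ×ˢ O : Finset _) := by
      intro p hp q hq hpq
      obtain ⟨hp1, hp2, hp3, hp4⟩ := key p hp
      obtain ⟨hq1, hq2, hq3, hq4⟩ := key q hq
      have hfix : ∀ i < m, (pick filt (fun g => g (β m)) 1 p.2) (β i) = β i := by
        rw [hfilt, Finset.mem_filter] at hp3
        exact hp3.2
      have hfixq : ∀ i < m, (pick filt (fun g => g (β m)) 1 q.2) (β i) = β i := by
        rw [hfilt, Finset.mem_filter] at hq3
        exact hq3.2
      have h1eq : p.1 = q.1 := by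
        funext i
        have := congrFun hpq (Fin.castSucc i)
        simp only [f, Equiv.Perm.mul_apply, Fin.coe_castSucc] at this
        rw [hfix i i.isLt, hfixq i i.isLt] at this
        calc p.1 i = Ftup (pick (A ^ m) Ftup 1 p.1) i := by rw [hp2]
        _ = Ftup (pick (A ^ m) Ftup 1 q.1) i := this
        _ = q.1 i := by rw [hq2]
      have h2eq : p.2 = q.2 := by
        have := congrFun hpq (Fin.last m)
        simp only [f, Equiv.Perm.mul_apply, Fin.val_last] at this
        rw [hp4, hq4, h1eq] at this
        exact (pick (A ^ m) Ftup 1 q.1).injective this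
      exact Prod.ext h1eq h2eq
    have hcard : (T ×ˢ O).card ≤ S.card := Finset.card_le_card_of_injOn f hmaps hinj
    have : ((T.card * O.card : ℕ) : ℝ) ≤ (S.card : ℝ) := by
      rw [← Finset.card_product]
      exact_mod_cast hcard
    calc r ^ (m + 1) = r ^ m * r := by ring
    _ ≤ (T.card : ℝ) * (O.card : ℝ) := by
        apply mul_le_mul hTcard hOcard hr (Nat.cast_nonneg _)
    _ ≤ (S.card : ℝ) := by push_cast at this; linarith
    
theorem stmt_18 {Ω : Type*} [Fintype Ω] [DecidableEq Ω] (n : ℕ) (hn : Fintype.card Ω = n)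
    (A : Finset (Equiv.Perm Ω)) (ρ : ℝ) (hρ0 : 0 < ρ) (hρ1 : ρ ≤ 1)
    (k : ℕ) (α : Fin k → Ω) (hα : Function.Injective α)
    (horb : ∀ j : Fin k,
      ρ * n ≤ (((A.filter fun g => ∀ i : Fin k, i < j → g (α i) = α i).image
        fun g => g (α j)).card : ℝ)) :
    (ρ * n) ^ k ≤ (((A ^ k).image fun g => fun i : Fin k => g (α i)).card : ℝ) := by
  classical
  rcases Nat.eq_zero_or_pos k with hk | hk
  · subst hk
    simp
  · set β : ℕ → Ω := fun i => α ⟨min i (k - 1), by omega⟩ with hβ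
    have hβeq : ∀ i : Fin k, β (i : ℕ) = α i := by
      intro i
      have : (⟨min (i : ℕ) (k - 1), by omega⟩ : Fin k) = i := by
        apply Fin.ext
        simp only []
        omega
      rw [hβ]
      simp only []
      rw [this]
    have hr : (0 : ℝ) ≤ ρ * n := mul_nonneg hρ0.le (Nat.cast_nonneg n)
    have := aux18 A (ρ * n) hr β k ?_
    · have hfun : (fun (g : Equiv.Perm Ω) (i : Fin k) => g (β (i : ℕ))) =
          fun g (i : Fin k) => g (α i) := by
        funext g i
        rw [hβeq i]
      rwa [hfun] at this
    · intro j hj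
      have := horb ⟨j, hj⟩
      have hfe : (A.filter fun g => ∀ i < j, g (β i) = β i) =
          (A.filter fun g => ∀ i : Fin k, i < (⟨j, hj⟩ : Fin k) → g (α i) = α i) := by
        apply Finset.filter_congr
        intro g _
        constructor
        · intro hg i hij
          rw [Fin.lt_def] at hij
          have := hg (i : ℕ) hij
          rwa [hβeq i] at this
        · intro hg i hij
          have hik : i < k := by omega
          have h2 := hg ⟨i, hik⟩ (by rw [Fin.lt_def]; exact hij)
          have hb : β i = α ⟨i, hik⟩ := hβeq ⟨i, hik⟩
          rw [hb]
          exact h2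
      rw [hfe]
      have hβj : β j = α ⟨j, hj⟩ := hβeq ⟨j, hj⟩
      rw [hβj]
      exact this
end

section
/- Let A ⊆ Sym(Ω), |Ω| = n, ρ ∈ (0,1), and let Σ = {α₁,…,α_k} ⊆ Ω be such that for every 1 ≤ j ≤ k the orbit of α_j under A_{(α₁,…,α_{j−1})} has at least ρn elements. Then the restriction to Σ of the setwise stabilizer (A^{−k}A^{k})_Σ contains at least ρ^k · k! distinct permutations of Σ. -/
/-!
Picking images of `α 0, …, α (k-1)` one at a time, an element of `A` fixing the earlier points
can send the next point anywhere in its orbit, so `A ^ k` produces at least `(ρ n) ^ k` distinct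
image tuples `(g (α i))ᵢ`. These tuples have at most `n.choose k` underlying sets, so some
set `S` is the range of at least `(ρ n) ^ k / n.choose k ≥ ρ ^ k k!` of them. Left-multiplying
by the inverse of one of them turns these into elements of `(A ^ k)⁻¹ * A ^ k` stabilizing
`Σ = range α` with distinct restrictions to `Σ`.
-/

open Pointwise

open Finset Equiv

section

variable {Ω : Type*} [DecidableEq Ω] {k : ℕ}

/-- `tuplesOf B α` is in bijection with the cosets of `Sym(Ω)_{(α)}` that `B` meets. -/
def tuplesOf (B : Finset (Perm Ω)) (α : Fin k → Ω) : Finset (Fin k → Ω) :=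
  B.image fun g i => g (α i)

def stabOrbitCard (A : Finset (Perm Ω)) (α : Fin k → Ω) (j : Fin k) : ℕ :=
  #((A.filter fun g => ∀ i, i < j → g (α i) = α i).image fun g => g (α j))

lemma stabOrbitCard_init (A : Finset (Perm Ω)) (α : Fin (k + 1) → Ω) (j : Fin k) :
    stabOrbitCard A (Fin.init α) j = stabOrbitCard A α j.castSucc := by
  have hfix : ∀ g : Perm Ω, (∀ i : Fin k, i < j → g (Fin.init α i) = Fin.init α i) ↔
      ∀ i : Fin (k + 1), i < j.castSucc → g (α i) = α i := by
    refine fun g => ⟨fun h i hi => ?_,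
      fun h i hi => h i.castSucc (Fin.castSucc_lt_castSucc_iff.2 hi)⟩
    obtain ⟨i, rfl⟩ :=
      Fin.exists_castSucc_eq.2 (Fin.ne_last_of_lt (hi.trans j.castSucc_lt_last))
    exact h i (Fin.castSucc_lt_castSucc_iff.1 hi)
  simp only [stabOrbitCard]
  congr 2
  exact filter_congr fun g _ => hfix g

lemma card_tuplesOf_init_mul_stabOrbitCard_last_le [Fintype Ω] (A B : Finset (Perm Ω))
    (α : Fin (k + 1) → Ω) :
    #(tuplesOf B (Fin.init α)) * stabOrbitCard A α (Fin.last k) ≤ #(tuplesOf (B * A) α) := by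
  refine (card_mul_le_card_mul (fun (t : Fin k → Ω) (u : Fin (k + 1) → Ω) => Fin.init u = t)
    (n := 1) ?_ ?_).trans_eq (mul_one _)
  · intro t ht
    obtain ⟨g, hg, rfl⟩ := mem_image.1 ht
    set S := A.filter fun a => ∀ i, i < Fin.last k → a (α i) = α i
    have hsub : S.image (fun a i => (g * a) (α i)) ⊆ (tuplesOf (B * A) α).bipartiteAbove
        (fun t u => Fin.init u = t) fun i => g (Fin.init α i) := by
      intro u hu
      obtain ⟨a, ha, rfl⟩ := mem_image.1 hu
      obtain ⟨haA, hfix⟩ := mem_filter.1 ha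
      refine (mem_bipartiteAbove _).2
        ⟨mem_image_of_mem _ (mul_mem_mul hg haA), funext fun i => ?_⟩
      simp [Fin.init, hfix i.castSucc (Fin.castSucc_lt_last i)]
    calc stabOrbitCard A α (Fin.last k)
        = #((S.image fun a i => (g * a) (α i)).image fun u => g⁻¹ (u (Fin.last k))) := by
          simp only [stabOrbitCard, image_image]
          congr 1
          exact image_congr fun a _ => by simp
      _ ≤ #(S.image fun a i => (g * a) (α i)) := card_image_le
      _ ≤ _ := card_le_card hsub
  · intro u _
    refine card_le_one.2 fun t ht t' ht' => ?_
    rw [mem_bipartiteBelow] at ht ht'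
    exact ht.2.symm.trans ht'.2

lemma prod_stabOrbitCard_le_card_tuplesOf_pow [Fintype Ω] (A : Finset (Perm Ω)) :
    ∀ {k : ℕ} (α : Fin k → Ω), ∏ j, stabOrbitCard A α j ≤ #(tuplesOf (A ^ k) α)
  | 0, α => by simp [tuplesOf]
  | k + 1, α => by
    rw [Fin.prod_univ_castSucc, pow_succ]
    simp only [← stabOrbitCard_init]
    exact (Nat.mul_le_mul_right _ (prod_stabOrbitCard_le_card_tuplesOf_pow A _)).trans
      (card_tuplesOf_init_mul_stabOrbitCard_last_le A _ α)

lemma card_tuplesOf_le_card_setStab_mul_choose [Fintype Ω] (B : Finset (Perm Ω))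
    {α : Fin k → Ω} (hα : Function.Injective α) :
    #(tuplesOf B α) ≤ #(tuplesOf ((B⁻¹ * B).filter fun g =>
        (univ.image α).image (fun x => g x) = univ.image α) α) * (Fintype.card Ω).choose k := by
  rw [← card_univ, ← card_powersetCard]
  refine card_le_mul_card_image_of_maps_to (f := fun u => univ.image u) (fun u hu => ?_) _
    fun S _ => ?_
  · obtain ⟨g, -, rfl⟩ := mem_image.1 hu
    rw [mem_powersetCard, card_image_of_injective (f := fun i => g (α i)) _
      (g.injective.comp hα), card_univ, Fintype.card_fin]
    exact ⟨subset_univ _, rfl⟩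
  obtain hS | ⟨u₀, hu₀⟩ := eq_empty_or_nonempty {u ∈ tuplesOf B α | univ.image u = S}
  · simp [hS]
  obtain ⟨hu₀B, rfl⟩ := mem_filter.1 hu₀
  obtain ⟨h, hh, rfl⟩ := mem_image.1 hu₀B
  refine card_le_card_of_injOn (fun u i => h⁻¹ (u i)) (fun u hu => ?_)
    fun u _ u' _ huu' => funext fun i => h⁻¹.injective (congrFun huu' i)
  obtain ⟨hu, hS⟩ := mem_filter.1 hu
  obtain ⟨g, hg, rfl⟩ := mem_image.1 hu
  refine mem_image.2 ⟨h⁻¹ * g, mem_filter.2 ⟨mul_mem_mul (inv_mem_inv hh) hg, ?_⟩, rfl⟩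
  have hS' : (univ.image α).image (fun x => g x) = (univ.image α).image (fun x => h x) := by
    simp only [image_image]
    exact hS
  rw [Perm.coe_mul, ← image_image, hS', image_image]
  simp

end

lemma pow_mul_factorial_mul_choose_le {ρ : ℝ} (hρ : 0 ≤ ρ) (n k : ℕ) :
    ρ ^ k * k.factorial * n.choose k ≤ (ρ * n) ^ k := by
  have hdesc : (k.factorial * n.choose k : ℝ) ≤ n ^ k := by
    exact_mod_cast (Nat.descFactorial_eq_factorial_mul_choose n k).symm.trans_le
      (Nat.descFactorial_le_pow n k)
  rw [mul_assoc, mul_pow]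
  exact mul_le_mul_of_nonneg_left hdesc (pow_nonneg hρ k)

theorem stmt_19 {Ω : Type*} [Fintype Ω] [DecidableEq Ω] (n : ℕ) (hn : Fintype.card Ω = n)
    (A : Finset (Equiv.Perm Ω)) (ρ : ℝ) (hρ : ρ ∈ Set.Ioo (0 : ℝ) 1)
    (k : ℕ) (α : Fin k → Ω) (hα : Function.Injective α)
    (horb : ∀ j : Fin k,
      ρ * n ≤ (((A.filter fun g => ∀ i : Fin k, i < j → g (α i) = α i).image
        fun g => g (α j)).card : ℝ)) :
    ρ ^ k * (Nat.factorial k : ℝ) ≤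
      (((((A ^ k)⁻¹ * A ^ k).filter fun g =>
          Finset.image (fun x => g x) (Finset.image α Finset.univ) = Finset.image α Finset.univ).image
        fun g => fun i : Fin k => g (α i)).card : ℝ) := by
  have hkn : k ≤ n := hn ▸ Fintype.card_fin k ▸ Fintype.card_le_of_injective α hα
  have hchoose : (0 : ℝ) < n.choose k := by exact_mod_cast Nat.choose_pos hkn
  refine le_of_mul_le_mul_right ?_ hchoose
  calc ρ ^ k * k.factorial * n.choose k
      ≤ (ρ * n) ^ k := pow_mul_factorial_mul_choose_le hρ.1.le n k
    _ = ∏ _j : Fin k, ρ * n := by simp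
    _ ≤ ∏ j, (stabOrbitCard A α j : ℝ) :=
        prod_le_prod (fun _ _ => mul_nonneg hρ.1.le n.cast_nonneg) fun j _ => horb j
    _ ≤ #(tuplesOf (A ^ k) α) := by
        exact_mod_cast prod_stabOrbitCard_le_card_tuplesOf_pow A α
    _ ≤ _ := by
        exact_mod_cast hn ▸ card_tuplesOf_le_card_setStab_mul_choose (A ^ k) hα
end
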